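/- arXiv:1511.00354 — 2 statements merged into one kernel-verified Lean document; each statement's English description precedes it below -/
import Mathlib

section
/- Let F be a nonarchimedean local field, ψ an unramified additive character of F, and m ≥ 1 an integer. Let W : SL₂(F) → ℂ be a function satisfying: (i) W(n(b)·g) = ψ(b)·W(g) for all b ∈ F and g ∈ SL₂(F); (ii) W(g·n(b)) = ψ(b)·W(g) for all b ∈ 𝔪^{-m} and g ∈ SL₂(F). If W(t(a)) ≠ 0 for some a ∈ F^×, then a² ∈ 1 + 𝔪^m. (Lemma 3.2(1) of the paper, stated for any function with the equivariance properties of a Howe-vector Whittaker function.) -/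
/-!
We model a nonarchimedean local field as a field `F` complete with respect to a
nontrivial discrete valuation `Valued.v : F → ℤₘ₀` (the hypothesis
`Function.Surjective (Valued.v : F → ℤₘ₀)` says the valuation is discrete and
nontrivial, with value group exactly `ℤ`), with finite residue field
(`FiniteResidueField F` below says `𝒪/𝔪` is finite).
For `m : ℤ`, `mpow F m` is the fractional ideal `𝔪^m = {x : v(x) ≥ m}` (written
multiplicatively: `v x ≤ ofAdd (-m)`), and `oneAddMpow F m` is the set `1 + 𝔪^m`.
-/

open scoped Multiplicative WithZero
open MatrixGroups MeasureTheory

noncomputable section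

/-- The fractional ideal `𝔪^m = {x ∈ F : v(x) ≥ m}`. -/
def mpow (F : Type*) [Field F] [Valued F ℤᵐ⁰] (m : ℤ) : Set F :=
  {x : F | Valued.v x ≤ ((Multiplicative.ofAdd (-m) : Multiplicative ℤ) : ℤᵐ⁰)}

/-- The set `1 + 𝔪^m`. -/
def oneAddMpow (F : Type*) [Field F] [Valued F ℤᵐ⁰] (m : ℤ) : Set F :=
  {x : F | x - 1 ∈ mpow F m}

/-- An additive character `ψ` of `F` is unramified if it is trivial on the ring of
integers `𝒪 = 𝔪^0` but nontrivial on `𝔪^{-1}`. -/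
def IsUnramified (F : Type*) [Field F] [Valued F ℤᵐ⁰] (ψ : AddChar F ℂ) : Prop :=
  (∀ x ∈ mpow F 0, ψ x = 1) ∧ ∃ x ∈ mpow F (-1), ψ x ≠ 1

/-- The residue field `𝒪/𝔪` is finite: finitely many elements of `𝒪` cover `𝒪`
modulo `𝔪`. -/
def FiniteResidueField (F : Type*) [Field F] [Valued F ℤᵐ⁰] : Prop :=
  ∃ S : Finset F, ∀ x ∈ mpow F 0, ∃ y ∈ S, x - y ∈ mpow F 1

/-- The residue field of `F` has characteristic different from `2`, i.e. `2` is a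
unit of the ring of integers, i.e. `2 ∉ 𝔪`. -/
def ResidueCharNeTwo (F : Type*) [Field F] [Valued F ℤᵐ⁰] : Prop :=
  (2 : F) ∉ mpow F 1

/-- `n(b) = [[1,b],[0,1]] ∈ SL₂(F)`. -/
def nMat (F : Type*) [Field F] (b : F) : SL(2,F) :=
  ⟨!![1, b; 0, 1], by simp [Matrix.det_fin_two_of]⟩

/-- `n̄(x) = [[1,0],[x,1]] ∈ SL₂(F)`. -/
def nbarMat (F : Type*) [Field F] (x : F) : SL(2,F) :=
  ⟨!![1, 0; x, 1], by simp [Matrix.det_fin_two_of]⟩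

/-- `t(a) = [[a,0],[0,a⁻¹]] ∈ SL₂(F)` for `a ∈ F^×`. -/
def tMat (F : Type*) [Field F] (a : Fˣ) : SL(2,F) :=
  ⟨!![(a : F), 0; 0, ((a⁻¹ : Fˣ) : F)], by simp [Matrix.det_fin_two_of]⟩

/-- `w = [[0,1],[-1,0]] ∈ SL₂(F)`. -/
def wMat (F : Type*) [Field F] : SL(2,F) :=
  ⟨!![0, 1; -1, 0], by simp [Matrix.det_fin_two_of]⟩

/-!
The torus normalizes the unipotent radical: `t(a) n(b) = n(a²b) t(a)`. Evaluating `W` there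
with the two equivariance properties gives `ψ(a²b) W(t(a)) = ψ(b) W(t(a))`, so if `W(t(a)) ≠ 0`
then `ψ` is trivial on `(a² - 1)·𝔪^{-m}`. If `a² - 1 ∉ 𝔪^m`, that set contains `𝔪^{-1}`, on
which the unramified `ψ` is nontrivial.
-/

open WithZero

theorem tMat_mul_nMat {F : Type*} [Field F] (a : Fˣ) (b : F) :
    tMat F a * nMat F b = nMat F ((a : F) ^ 2 * b) * tMat F a := by
  refine Subtype.ext ?_
  simp only [Matrix.SpecialLinearGroup.coe_mul]
  simp [tMat, nMat]
  field_simp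

theorem map_sq_sub_one_mul_eq_one_of_apply_tMat_ne_zero {F M : Type*} [Field F]
    [MonoidWithZero M] [IsRightCancelMulZero M] (ψ : AddChar F M) (W : SL(2,F) → M) {S : Set F}
    (hW1 : ∀ (b : F) (g : SL(2,F)), W (nMat F b * g) = ψ b * W g)
    (hW2 : ∀ b ∈ S, ∀ g : SL(2,F), W (g * nMat F b) = ψ b * W g)
    {a : Fˣ} (hWa : W (tMat F a) ≠ 0) {b : F} (hb : b ∈ S) :
    ψ (((a : F) ^ 2 - 1) * b) = 1 := by
  have hsq : ψ ((a : F) ^ 2 * b) = ψ b := by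
    refine mul_right_cancel₀ hWa ?_
    rw [← hW1, ← tMat_mul_nMat, hW2 b hb]
  have hsplit : ψ ((a : F) ^ 2 * b) = ψ (((a : F) ^ 2 - 1) * b) * ψ b := by
    rw [← AddChar.map_add_eq_mul, sub_one_mul, sub_add_cancel]
  rwa [hsplit, (ψ.val_isUnit b).mul_eq_right] at hsq

section Valued

variable {F : Type*} [Field F] [Valued F ℤᵐ⁰]

theorem mem_mpow_iff {m : ℤ} {x : F} : x ∈ mpow F m ↔ Valued.v x ≤ exp (-m) := Iff.rfl

theorem inv_mul_mem_mpow_of_not_mem {k n : ℤ} {x c : F} (hx : x ∈ mpow F k)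
    (hc : c ∉ mpow F n) : c⁻¹ * x ∈ mpow F (k - n + 1) := by
  rw [mem_mpow_iff, not_le] at hc
  obtain ⟨t, ht⟩ : ∃ t, Valued.v c = exp t := ⟨_, (exp_log (ne_zero_of_lt hc)).symm⟩
  rw [ht, exp_lt_exp] at hc
  rw [mem_mpow_iff, map_mul, map_inv₀, ht, ← exp_neg]
  calc exp (-t) * Valued.v x ≤ exp (-t) * exp (-k) := by gcongr; exact hx
    _ = exp (-t - k) := by rw [← exp_add, sub_eq_add_neg]
    -- the value group is `ℤ`, so `-n < t` gives `-n + 1 ≤ t`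
    _ ≤ exp (-(k - n + 1)) := exp_le_exp.mpr (by omega)

theorem mem_mpow_of_forall_map_mul_eq_one {M : Type*} [Monoid M] (ψ : AddChar F M)
    {k n : ℤ} {c : F} (hψ : ∃ x ∈ mpow F k, ψ x ≠ 1)
    (hc : ∀ b ∈ mpow F (k - n + 1), ψ (c * b) = 1) : c ∈ mpow F n := by
  by_contra hcn
  obtain ⟨x, hx, hψx⟩ := hψ
  have hc0 : c ≠ 0 := by
    rintro rfl
    exact hcn (by simp [mem_mpow_iff])
  have := hc _ (inv_mul_mem_mpow_of_not_mem hx hcn)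
  rw [mul_inv_cancel_left₀ hc0] at this
  exact hψx this

end Valued

theorem howe_vector_torus_support_general
    (F : Type*) [Field F] [Valued F ℤᵐ⁰]
    (ψ : AddChar F ℂ) (hψ : IsUnramified F ψ)
    (m : ℤ)
    (W : SL(2,F) → ℂ)
    (hW1 : ∀ (b : F) (g : SL(2,F)), W (nMat F b * g) = ψ b * W g)
    (hW2 : ∀ b ∈ mpow F (-m), ∀ g : SL(2,F), W (g * nMat F b) = ψ b * W g)
    (a : Fˣ) (hWa : W (tMat F a) ≠ 0) :
    ((a : F)) ^ 2 ∈ oneAddMpow F m := by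
  refine mem_mpow_of_forall_map_mul_eq_one ψ (k := -1) hψ.2 fun b hb => ?_
  rw [show -1 - m + 1 = -m by ring] at hb
  exact map_sq_sub_one_mul_eq_one_of_apply_tMat_ne_zero ψ W hW1 hW2 hWa hb

/-- Lemma 3.2(1). Let `ψ` be unramified, `m ≥ 1`, and let
`W : SL₂(F) → ℂ` satisfy `W(n(b)·g) = ψ(b)·W(g)` for all `b ∈ F` and
`W(g·n(b)) = ψ(b)·W(g)` for all `b ∈ 𝔪^{-m}`. If `W(t(a)) ≠ 0` for some
`a ∈ F^×`, then `a² ∈ 1 + 𝔪^m`. -/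
theorem howe_vector_torus_support
    (F : Type*) [Field F] [Valued F ℤᵐ⁰] [CompleteSpace F]
    (hdisc : Function.Surjective (Valued.v : F → ℤᵐ⁰))
    (hfin : FiniteResidueField F)
    (ψ : AddChar F ℂ) (hψcont : Continuous ψ) (hψ : IsUnramified F ψ)
    (m : ℤ) (hm : 1 ≤ m)
    (W : SL(2,F) → ℂ)
    (hW1 : ∀ (b : F) (g : SL(2,F)), W (nMat F b * g) = ψ b * W g)
    (hW2 : ∀ b ∈ mpow F (-m), ∀ g : SL(2,F), W (g * nMat F b) = ψ b * W g)
    (a : Fˣ) (hWa : W (tMat F a) ≠ 0) :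
    ((a : F)) ^ 2 ∈ oneAddMpow F m :=
  howe_vector_torus_support_general F ψ hψ m W hW1 hW2 a hWa
end
end

section
/- Let F be a nonarchimedean local field with absolute value |·| and let C > 0 be a real number. Then there exists an integer i₀ = i₀(C) such that for all integers i ≥ i₀ and all x ∈ F with |x| ≤ C: an element n̄(y) (y ∈ F) satisfies n̄(y)·n(x) ∈ B·N̄_i if and only if y ∈ 𝔪^{3i}, where B is the subgroup of upper triangular matrices in SL₂(F) and N̄_i = {n̄(ȳ) : ȳ ∈ 𝔪^{3i}}. (Lemma 3.7(2) of the paper.) -/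
/-!
We model a nonarchimedean local field as a field `F` complete with respect to a
nontrivial discrete valuation `Valued.v : F → ℤₘ₀` (the hypothesis
`Function.Surjective (Valued.v : F → ℤₘ₀)` says the valuation is discrete and
nontrivial, with value group exactly `ℤ`), with finite residue field
(`FiniteResidueField F` below says `𝒪/𝔪` is finite).
For `m : ℤ`, `mpow F m` is the fractional ideal `𝔪^m = {x : v(x) ≥ m}` (written
multiplicatively: `v x ≤ ofAdd (-m)`), and `oneAddMpow F m` is the set `1 + 𝔪^m`.
-/

open scoped Multiplicative WithZero
open MatrixGroups MeasureTheory

noncomputable section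

/-!
Comparing entries, `n̄(y) n(x) = [[a,b],[0,a⁻¹]] n̄(ȳ)` forces `b = x`, `a⁻¹ = 1 + xy` and
`ȳ = y / (1 + xy)`. Once `i` is large, `|x| ≤ C` and `y` or `ȳ` in `𝔪^{3i}` make `xy`, resp. `xȳ`,
lie in `𝔪`, so `1 + xy` is a unit and `y`, `ȳ` have the same absolute value.
-/

theorem exists_nbar_mul_n_eq_upper_mul_nbar_iff {F : Type*} [Field F] (x y ybar : F) :
    (∃ a b : F, a ≠ 0 ∧
        (!![1, 0; y, 1] : Matrix (Fin 2) (Fin 2) F) * !![1, x; 0, 1] =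
          !![a, b; 0, a⁻¹] * !![1, 0; ybar, 1]) ↔
      1 + x * y ≠ 0 ∧ ybar * (1 + x * y) = y := by
  constructor
  · rintro ⟨a, b, ha, heq⟩
    have h10 := congrFun (congrFun heq 1) 0
    have h11 := congrFun (congrFun heq 1) 1
    simp only [Matrix.mul_apply, Fin.sum_univ_two, Matrix.of_apply, Matrix.cons_val',
      Matrix.cons_val_zero, Matrix.cons_val_one, Matrix.empty_val', Matrix.cons_val_fin_one]
      at h10 h11
    have hinv : 1 + x * y = a⁻¹ := by linear_combination h11
    exact ⟨hinv ▸ inv_ne_zero ha, by rw [hinv]; linear_combination -h10⟩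
  · rintro ⟨hne, hybar⟩
    refine ⟨(1 + x * y)⁻¹, x, inv_ne_zero hne, ?_⟩
    ext i j
    fin_cases i <;> fin_cases j <;> simp [Matrix.mul_apply, Fin.sum_univ_two]
    · field_simp
      linear_combination -x * hybar
    · linear_combination -hybar
    · ring

section Valuation

variable {F Γ₀ : Type*} [Field F] [LinearOrderedCommGroupWithZero Γ₀]

theorem Valuation.map_one_add_mul_eq_one (v : Valuation F Γ₀) {x y : F} {δ : Γ₀}
    (hδ : v x * δ < 1) (hy : v y ≤ δ) : v (1 + x * y) = 1 :=
  v.map_one_add_of_lt <| (v.map_mul x y).trans_le (mul_le_mul_right hy _) |>.trans_lt hδ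

theorem Valuation.exists_mul_one_add_mul_eq_iff (v : Valuation F Γ₀) {x : F} {δ : Γ₀}
    (hδ : v x * δ < 1) (y : F) :
    (∃ ybar, v ybar ≤ δ ∧ 1 + x * y ≠ 0 ∧ ybar * (1 + x * y) = y) ↔ v y ≤ δ := by
  constructor
  · rintro ⟨ybar, hybar, -, hy⟩
    have hunit : v (1 + x * -ybar) = 1 := v.map_one_add_mul_eq_one hδ (by rwa [v.map_neg])
    have hyybar : y * (1 + x * -ybar) = ybar := by linear_combination -hy
    rw [← hyybar, map_mul, hunit, mul_one] at hybar
    exact hybar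
  · intro hy
    have hunit := v.map_one_add_mul_eq_one hδ hy
    have hne : 1 + x * y ≠ 0 := v.ne_zero_iff.mp (hunit ▸ one_ne_zero)
    refine ⟨y * (1 + x * y)⁻¹, ?_, hne, inv_mul_cancel_right₀ hne y⟩
    rwa [map_mul, map_inv₀, hunit, inv_one, mul_one]

end Valuation

theorem WithZero.exists_forall_ge_mul_ofAdd_neg_lt_one (γ : ℤᵐ⁰) :
    ∃ n₀ : ℤ, ∀ n, n₀ ≤ n → γ * ((Multiplicative.ofAdd (-n) : Multiplicative ℤ) : ℤᵐ⁰) < 1 := by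
  induction γ using WithZero.recZeroCoe with
  | zero => exact ⟨0, fun _ _ => by simp⟩
  | coe c =>
    refine ⟨Multiplicative.toAdd c + 1, fun n hn => ?_⟩
    rw [← WithZero.coe_mul, ← WithZero.coe_one, WithZero.coe_lt_coe, ← Multiplicative.toAdd_lt]
    simp only [toAdd_mul, toAdd_ofAdd, toAdd_one]
    omega

theorem bruhat_cell_membership_general
    (F : Type*) [Field F] [Valued F ℤᵐ⁰]
    (γ : ℤᵐ⁰) :
    ∃ i₀ : ℤ, ∀ i : ℤ, i₀ ≤ i →
      ∀ x : F, Valued.v x ≤ γ →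
        ∀ y : F,
          ((∃ a b ybar : F, a ≠ 0 ∧ ybar ∈ mpow F (3 * i) ∧
              (!![1, 0; y, 1] : Matrix (Fin 2) (Fin 2) F) * !![1, x; 0, 1] =
                !![a, b; 0, a⁻¹] * !![1, 0; ybar, 1]) ↔
            y ∈ mpow F (3 * i)) := by
  obtain ⟨n₀, hn₀⟩ := WithZero.exists_forall_ge_mul_ofAdd_neg_lt_one γ
  refine ⟨|n₀|, fun i hi x hx y => ?_⟩
  have hδ := (mul_le_mul_left hx _).trans_lt <| hn₀ (3 * i) <| by
    linarith [le_abs_self n₀, abs_nonneg n₀]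
  simp only [mpow, Set.mem_ofPred_eq]
  rw [← Valued.v.exists_mul_one_add_mul_eq_iff hδ y]
  simp only [← exists_nbar_mul_n_eq_upper_mul_nbar_iff]
  constructor
  · rintro ⟨a, b, ybar, ha, hybar, heq⟩
    exact ⟨ybar, hybar, a, b, ha, heq⟩
  · rintro ⟨ybar, hybar, a, b, ha, heq⟩
    exact ⟨a, b, ybar, ha, hybar, heq⟩

/-- Lemma 3.7(2). Here the bound `|x| ≤ C` (for a real `C > 0`) is
encoded by the equivalent condition `v(x) ≤ γ` for an element `γ ≠ 0` of the value
group `ℤₘ₀`.  There is `i₀ = i₀(γ)` such that for all `i ≥ i₀` and all `x` with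
`|x| ≤ C`: `n̄(y)·n(x)` lies in `B·N̄_i` (i.e. equals `[[a,b],[0,a⁻¹]]·n̄(ȳ)` for some
`a ≠ 0`, `b`, and `ȳ ∈ 𝔪^{3i}`) if and only if `y ∈ 𝔪^{3i}`. -/
theorem bruhat_cell_membership
    (F : Type*) [Field F] [Valued F ℤᵐ⁰] [CompleteSpace F]
    (hdisc : Function.Surjective (Valued.v : F → ℤᵐ⁰))
    (hfin : FiniteResidueField F)
    (γ : ℤᵐ⁰) (hγ : γ ≠ 0) :
    ∃ i₀ : ℤ, ∀ i : ℤ, i₀ ≤ i →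
      ∀ x : F, Valued.v x ≤ γ →
        ∀ y : F,
          ((∃ a b ybar : F, a ≠ 0 ∧ ybar ∈ mpow F (3 * i) ∧
              (!![1, 0; y, 1] : Matrix (Fin 2) (Fin 2) F) * !![1, x; 0, 1] =
                !![a, b; 0, a⁻¹] * !![1, 0; ybar, 1]) ↔
            y ∈ mpow F (3 * i)) :=
  bruhat_cell_membership_general F γ
end
end
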